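/- arXiv:1812.00250 — 3 statements merged into one kernel-verified Lean document; each statement's English description precedes it below -/
import Mathlib

section
/- Consider two layers each containing two families of null hypotheses. Let α ≥ 0 and let initial critical values α_{11}, α_{12}, α_{21}, α_{22} ≥ 0 satisfy α_{11}+α_{12}+α_{21}+α_{22} ≤ α, and let transition coefficients g_{1j2i} ∈ [0,1] (j=1,2; i=1,2) satisfy g_{1j21}+g_{1j22} ≤ 1 for each j. For j = 1,2 let E_{1j} ⊆ Ω be a measurable event (a type I error occurs in family F_{1j} when tested at level α_{1j}) and let t_{1j} be reals with 0 ≤ t_{1j} ≤ α_{1j} and P(E_{1j}) ≤ t_{1j}. For i = 1,2 let E_{2i}(·) be a monotone family of measurable events with P(E_{2i}(x)) ≤ x for all x ≥ 0, and let α*_{2i} : Ω → ℝ be random critical values such that for every ω ∉ E_{11} ∪ E_{12} one has α*_{2i}(ω) ≤ α_{2i} + Σ_{j=1}^{2} (α_{1j} − t_{1j}) g_{1j2i}; assume the sets {ω : ω ∈ E_{2i}(α*_{2i}(ω))} are measurable. Then the overall familywise error rate satisfies P(E_{11} ∪ E_{12} ∪ {ω : ω ∈ E_{21}(α*_{21}(ω))}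 ∪ {ω : ω ∈ E_{22}(α*_{22}(ω))}) ≤ α. -/
open MeasureTheory

/-- Theorem 1 of the paper: overall FWER control of the two-layer family-based
graphical approach with four families (two families in each of two layers). -/
theorem two_layer_family_based_FWER_control
    {Ω : Type*} [MeasurableSpace Ω] (P : Measure Ω) [IsProbabilityMeasure P]
    (α : ℝ) (hα : 0 ≤ α)
    (α1 α2 : Fin 2 → ℝ) (hα1 : ∀ j, 0 ≤ α1 j) (hα2 : ∀ i, 0 ≤ α2 i)
    (hsum : α1 0 + α1 1 + α2 0 + α2 1 ≤ α)
    (g : Fin 2 → Fin 2 → ℝ)  -- g j i = g_{1j2i}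
    (hg0 : ∀ j i, 0 ≤ g j i) (hg1 : ∀ j i, g j i ≤ 1)
    (hgrow : ∀ j, g j 0 + g j 1 ≤ 1)
    -- layer 1: events and error-rate bounds
    (E1 : Fin 2 → Set Ω) (hE1meas : ∀ j, MeasurableSet (E1 j))
    (t1 : Fin 2 → ℝ) (ht1nonneg : ∀ j, 0 ≤ t1 j) (ht1le : ∀ j, t1 j ≤ α1 j)
    (hE1prob : ∀ j, P (E1 j) ≤ ENNReal.ofReal (t1 j))
    -- layer 2: monotone FWER-controlling families of events
    (E2 : Fin 2 → ℝ → Set Ω)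
    (hE2meas : ∀ i x, MeasurableSet (E2 i x))
    (hE2mono : ∀ i x y, x ≤ y → E2 i x ⊆ E2 i y)
    (hE2FWER : ∀ i x, 0 ≤ x → P (E2 i x) ≤ ENNReal.ofReal x)
    -- random critical values for layer 2
    (αstar : Fin 2 → Ω → ℝ)
    (hαstar : ∀ i ω, ω ∉ E1 0 ∪ E1 1 →
      αstar i ω ≤ α2 i + ∑ j : Fin 2, (α1 j - t1 j) * g j i)
    (hSmeas : ∀ i, MeasurableSet {ω | ω ∈ E2 i (αstar i ω)}) :
    P (E1 0 ∪ E1 1 ∪ {ω | ω ∈ E2 0 (αstar 0 ω)} ∪ {ω | ω ∈ E2 1 (αstar 1 ω)})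
      ≤ ENNReal.ofReal α := by
  set β : Fin 2 → ℝ := fun i => α2 i + ∑ j : Fin 2, (α1 j - t1 j) * g j i with hβ
  have hβ0 : ∀ i, 0 ≤ β i := by
    intro i
    have : ∀ j : Fin 2, 0 ≤ (α1 j - t1 j) * g j i := fun j =>
      mul_nonneg (sub_nonneg.2 (ht1le j)) (hg0 j i)
    have hs : (0:ℝ) ≤ ∑ j : Fin 2, (α1 j - t1 j) * g j i :=
      Finset.sum_nonneg fun j _ => this j
    simp only [hβ]; linarith [hα2 i]
  have hsub : ∀ i : Fin 2, {ω | ω ∈ E2 i (αstar i ω)} ⊆ (E1 0 ∪ E1 1) ∪ E2 i (β i) := by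
    intro i ω hω
    by_cases h : ω ∈ E1 0 ∪ E1 1
    · exact Or.inl h
    · exact Or.inr (hE2mono i _ _ (hαstar i ω h) hω)
  have hU : (E1 0 ∪ E1 1 ∪ {ω | ω ∈ E2 0 (αstar 0 ω)} ∪ {ω | ω ∈ E2 1 (αstar 1 ω)})
      ⊆ E1 0 ∪ E1 1 ∪ E2 0 (β 0) ∪ E2 1 (β 1) := by
    intro ω hω
    rcases hω with ((h|h)|h)|h
    · exact Or.inl (Or.inl (Or.inl h))
    · exact Or.inl (Or.inl (Or.inr h))
    · rcases hsub 0 h with h|h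
      · exact Or.inl (Or.inl h)
      · exact Or.inl (Or.inr h)
    · rcases hsub 1 h with h|h
      · exact Or.inl (Or.inl h)
      · exact Or.inr h
  calc P (E1 0 ∪ E1 1 ∪ {ω | ω ∈ E2 0 (αstar 0 ω)} ∪ {ω | ω ∈ E2 1 (αstar 1 ω)})
      ≤ P (E1 0 ∪ E1 1 ∪ E2 0 (β 0) ∪ E2 1 (β 1)) := measure_mono hU
    _ ≤ P (E1 0) + P (E1 1) + P (E2 0 (β 0)) + P (E2 1 (β 1)) := by
        refine le_trans (measure_union_le _ _) ?_
        gcongr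
        refine le_trans (measure_union_le _ _) ?_
        gcongr
        exact measure_union_le _ _
    _ ≤ ENNReal.ofReal (t1 0) + ENNReal.ofReal (t1 1)
        + ENNReal.ofReal (β 0) + ENNReal.ofReal (β 1) := by
        gcongr
        · exact hE1prob 0
        · exact hE1prob 1
        · exact hE2FWER 0 _ (hβ0 0)
        · exact hE2FWER 1 _ (hβ0 1)
    _ = ENNReal.ofReal (t1 0 + t1 1 + β 0 + β 1) := by
        rw [ENNReal.ofReal_add (by linarith [ht1nonneg 0, ht1nonneg 1, hβ0 0]) (hβ0 1),
            ENNReal.ofReal_add (by linarith [ht1nonneg 0, ht1nonneg 1]) (hβ0 0),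
            ENNReal.ofReal_add (ht1nonneg 0) (ht1nonneg 1)]
    _ ≤ ENNReal.ofReal α := by
        apply ENNReal.ofReal_le_ofReal
        have h0 := hgrow 0
        have h1 := hgrow 1
        have e0 : (α1 0 - t1 0) * (g 0 0 + g 0 1) ≤ α1 0 - t1 0 := by
          nlinarith [sub_nonneg.2 (ht1le 0)]
        have e1 : (α1 1 - t1 1) * (g 1 0 + g 1 1) ≤ α1 1 - t1 1 := by
          nlinarith [sub_nonneg.2 (ht1le 1)]
        simp only [hβ, Fin.sum_univ_two]
        nlinarith
end

section
/- Consider n ≥ 1 layers, with layer i containing l_i ≥ 1 families of null hypotheses. Let α ≥ 0 and let initial critical values α_{ij} ≥ 0 (1 ≤ i ≤ n, 1 ≤ j ≤ l_i) satisfy Σ_{i=1}^{n} Σ_{j=1}^{l_i} α_{ij} ≤ α. Let transition coefficients g_{klij} ∈ [0,1] satisfy g_{klij} = 0 whenever i ≤ k, and Σ_{i=k+1}^{n} Σ_{j=1}^{l_i} g_{klij} ≤ 1 for each (k,l). Define worst-case critical values recursively by ᾱ_{ij} = α_{ij} + Σ_{k<i} Σ_{l=1}^{l_k} (ᾱ_{kl}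 − t_{kl}) g_{klij}, where t_{ij} are reals with 0 ≤ t_{ij} ≤ ᾱ_{ij}. For each family (i,j) let E_{ij}(·) be a monotone family of measurable events with P(E_{ij}(x)) ≤ x for all x ≥ 0 and P(E_{ij}(ᾱ_{ij})) ≤ t_{ij}, and let α*_{ij} : Ω → ℝ be random critical values such that for every ω not belonging to any of the sets {ω : ω ∈ E_{kl}(α*_{kl}(ω))} with k < i, one has α*_{ij}(ω) ≤ ᾱ_{ij}; assume the sets {ω : ω ∈ E_{ij}(α*_{ij}(ω))} are measurable. Then the overall familywise error rate satisfies P(∪_{i=1}^{n} ∪_{j=1}^{l_i} {ω : ω ∈ E_{ij}(α*_{ij}(ω))}) ≤ Σ_{i=1}^{n} Σ_{j=1}^{l_i} α_{ij} ≤ α. -/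
/-!
On the event that some true null hypothesis is rejected, look at the first layer `i` in which this
happens. No error has occurred in the earlier layers, so every family of layer `i` was tested at a
critical value at most its worst case `ᾱ_{ij}`, and by monotonicity the error lies in
`E_{ij}(ᾱ_{ij})`. Hence the FWER is at most `∑ P(E_{ij}(ᾱ_{ij})) ≤ ∑ t_{ij}`. Summing the recursion
for `ᾱ`, and using that `ᾱ_{kl} - t_{kl} ≥ 0` while the coefficients `g_{kl··}` sum to at most one,
gives `∑ ᾱ ≤ ∑ α + ∑ (ᾱ - t)`, that is `∑ t ≤ ∑ α`.
-/

open MeasureTheory Finset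

theorem iUnion_subset_iUnion_of_minimal {Ω ι : Type*} [LT ι] [WellFoundedLT ι] {κ : ι → Type*}
    (S T : (i : ι) → κ i → Set Ω)
    (h : ∀ i j ω, ω ∈ S i j → (∀ k < i, ∀ l, ω ∉ S k l) → ω ∈ T i j) :
    ⋃ i, ⋃ j, S i j ⊆ ⋃ i, ⋃ j, T i j := by
  intro ω hω
  obtain ⟨i, ⟨j, hj⟩, hmin⟩ :=
    wellFounded_lt.has_min {i | ∃ j, ω ∈ S i j} (Set.mem_iUnion₂.1 hω)
  exact Set.mem_iUnion₂.2 ⟨i, j, h i j ω hj fun k hk l hl => hmin k ⟨l, hl⟩ hk⟩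

section Transfer

variable {ι : Type*} [Fintype ι] {κ : ι → Type*} [∀ i, Fintype (κ i)]
  (r : ι → ι → Prop) [DecidableRel r]

theorem sum_sum_transfer_eq {R : Type*} [CommSemiring R] (c : (i : ι) → κ i → R)
    (g : (k : ι) → κ k → (i : ι) → κ i → R) :
    ∑ i, ∑ j, ∑ k ∈ univ.filter (r · i), ∑ l, c k l * g k l i j
      = ∑ k, ∑ l, c k l * ∑ i ∈ univ.filter (r k ·), ∑ j, g k l i j := by
  simp_rw [sum_filter, mul_sum, mul_ite, mul_zero, mul_sum, ite_sum_zero]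
  exact (sum_congr rfl fun i _ => sum_comm).trans <| sum_comm.trans <|
    sum_congr rfl fun k _ => (sum_congr rfl fun i _ => sum_comm).trans sum_comm

theorem sum_sum_le_sum_sum_of_transfer (a abar t : (i : ι) → κ i → ℝ)
    (g : (k : ι) → κ k → (i : ι) → κ i → ℝ)
    (hgrow : ∀ k l, ∑ i ∈ univ.filter (r k ·), ∑ j, g k l i j ≤ 1)
    (habar : ∀ i j,
      abar i j = a i j + ∑ k ∈ univ.filter (r · i), ∑ l, (abar k l - t k l) * g k l i j)
    (htle : ∀ i j, t i j ≤ abar i j) :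
    ∑ i, ∑ j, t i j ≤ ∑ i, ∑ j, a i j := by
  have habar_sum : ∑ i, ∑ j, abar i j ≤ ∑ i, ∑ j, a i j + ∑ i, ∑ j, (abar i j - t i j) := calc
    ∑ i, ∑ j, abar i j
        = ∑ i, ∑ j, a i j + ∑ k, ∑ l, (abar k l - t k l) *
            ∑ i ∈ univ.filter (r k ·), ∑ j, g k l i j := by
      simp_rw [← sum_sum_transfer_eq, ← sum_add_distrib, ← habar]
    _ ≤ ∑ i, ∑ j, a i j + ∑ k, ∑ l, (abar k l - t k l) := by
      gcongr with k _ l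
      exact mul_le_of_le_one_right (sub_nonneg.2 (htle k l)) (hgrow k l)
  simp only [sum_sub_distrib] at habar_sum
  linarith

end Transfer

theorem multi_layer_family_based_FWER_control_general
    {Ω : Type*} [MeasurableSpace Ω] (P : Measure Ω)
    (n : ℕ) (l : Fin n → ℕ)
    (α : ℝ)
    (a : (i : Fin n) → Fin (l i) → ℝ)
    (hsum : ∑ i : Fin n, ∑ j : Fin (l i), a i j ≤ α)
    -- transition coefficients g k l' i j = g_{k l' i j}
    (g : (k : Fin n) → Fin (l k) → (i : Fin n) → Fin (l i) → ℝ)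
    (hgrow : ∀ k l', ∑ i ∈ Finset.univ.filter (fun i : Fin n => k < i),
      ∑ j : Fin (l i), g k l' i j ≤ 1)
    -- worst-case critical values, defined recursively
    (abar : (i : Fin n) → Fin (l i) → ℝ)
    (t : (i : Fin n) → Fin (l i) → ℝ)
    (habar : ∀ i j, abar i j = a i j +
      ∑ k ∈ Finset.univ.filter (fun k : Fin n => k < i),
        ∑ l' : Fin (l k), (abar k l' - t k l') * g k l' i j)
    (ht0 : ∀ i j, 0 ≤ t i j) (htle : ∀ i j, t i j ≤ abar i j)
    -- monotone FWER-controlling families of events for each family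
    (E : (i : Fin n) → Fin (l i) → ℝ → Set Ω)
    (hEmono : ∀ i j x y, x ≤ y → E i j x ⊆ E i j y)
    (hEbar : ∀ i j, P (E i j (abar i j)) ≤ ENNReal.ofReal (t i j))
    -- random critical values
    (αstar : (i : Fin n) → Fin (l i) → Ω → ℝ)
    (hαstar : ∀ i j ω,
      (∀ k : Fin n, k < i → ∀ l' : Fin (l k), ω ∉ E k l' (αstar k l' ω)) →
      αstar i j ω ≤ abar i j) :
    P (⋃ i : Fin n, ⋃ j : Fin (l i), {ω | ω ∈ E i j (αstar i j ω)})
      ≤ ENNReal.ofReal (∑ i : Fin n, ∑ j : Fin (l i), a i j) ∧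
    ENNReal.ofReal (∑ i : Fin n, ∑ j : Fin (l i), a i j) ≤ ENNReal.ofReal α := by
  refine ⟨?_, ENNReal.ofReal_le_ofReal hsum⟩
  have hfirst : ⋃ i, ⋃ j, {ω | ω ∈ E i j (αstar i j ω)} ⊆ ⋃ i, ⋃ j, E i j (abar i j) :=
    iUnion_subset_iUnion_of_minimal _ _ fun i j ω hω hprev =>
      hEmono i j _ _ (hαstar i j ω hprev) hω
  have ht : ∑ i, ∑ j, t i j ≤ ∑ i, ∑ j, a i j :=
    sum_sum_le_sum_sum_of_transfer (· < ·) a abar t g hgrow habar htle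
  calc P (⋃ i, ⋃ j, {ω | ω ∈ E i j (αstar i j ω)})
      ≤ P (⋃ i, ⋃ j, E i j (abar i j)) := measure_mono hfirst
    _ ≤ ∑ i, ∑ j, P (E i j (abar i j)) :=
      (measure_iUnion_fintype_le _ _).trans (sum_le_sum fun i _ => measure_iUnion_fintype_le _ _)
    _ ≤ ∑ i, ∑ j, ENNReal.ofReal (t i j) := sum_le_sum fun i _ => sum_le_sum fun j _ => hEbar i j
    _ = ENNReal.ofReal (∑ i, ∑ j, t i j) := by
      rw [ENNReal.ofReal_sum_of_nonneg fun i _ => sum_nonneg fun j _ => ht0 i j]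
      exact sum_congr rfl fun i _ => (ENNReal.ofReal_sum_of_nonneg fun j _ => ht0 i j).symm
    _ ≤ ENNReal.ofReal (∑ i, ∑ j, a i j) := ENNReal.ofReal_le_ofReal ht

/-- Theorem 2 of the paper: overall FWER control of the general multi-layer
family-based graphical approach. -/
theorem multi_layer_family_based_FWER_control
    {Ω : Type*} [MeasurableSpace Ω] (P : Measure Ω) [IsProbabilityMeasure P]
    (n : ℕ) (hn : 1 ≤ n) (l : Fin n → ℕ) (hl : ∀ i, 1 ≤ l i)
    (α : ℝ) (hα : 0 ≤ α)
    (a : (i : Fin n) → Fin (l i) → ℝ) (ha : ∀ i j, 0 ≤ a i j)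
    (hsum : ∑ i : Fin n, ∑ j : Fin (l i), a i j ≤ α)
    -- transition coefficients g k l' i j = g_{k l' i j}
    (g : (k : Fin n) → Fin (l k) → (i : Fin n) → Fin (l i) → ℝ)
    (hg0 : ∀ k l' i j, 0 ≤ g k l' i j) (hg1 : ∀ k l' i j, g k l' i j ≤ 1)
    (hgzero : ∀ k l' i j, i ≤ k → g k l' i j = 0)
    (hgrow : ∀ k l', ∑ i ∈ Finset.univ.filter (fun i : Fin n => k < i),
      ∑ j : Fin (l i), g k l' i j ≤ 1)
    -- worst-case critical values, defined recursively
    (abar : (i : Fin n) → Fin (l i) → ℝ)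
    (t : (i : Fin n) → Fin (l i) → ℝ)
    (habar : ∀ i j, abar i j = a i j +
      ∑ k ∈ Finset.univ.filter (fun k : Fin n => k < i),
        ∑ l' : Fin (l k), (abar k l' - t k l') * g k l' i j)
    (ht0 : ∀ i j, 0 ≤ t i j) (htle : ∀ i j, t i j ≤ abar i j)
    -- monotone FWER-controlling families of events for each family
    (E : (i : Fin n) → Fin (l i) → ℝ → Set Ω)
    (hEmeas : ∀ i j x, MeasurableSet (E i j x))
    (hEmono : ∀ i j x y, x ≤ y → E i j x ⊆ E i j y)
    (hEFWER : ∀ i j x, 0 ≤ x → P (E i j x) ≤ ENNReal.ofReal x)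
    (hEbar : ∀ i j, P (E i j (abar i j)) ≤ ENNReal.ofReal (t i j))
    -- random critical values
    (αstar : (i : Fin n) → Fin (l i) → Ω → ℝ)
    (hαstar : ∀ i j ω,
      (∀ k : Fin n, k < i → ∀ l' : Fin (l k), ω ∉ E k l' (αstar k l' ω)) →
      αstar i j ω ≤ abar i j)
    (hSmeas : ∀ i j, MeasurableSet {ω | ω ∈ E i j (αstar i j ω)}) :
    P (⋃ i : Fin n, ⋃ j : Fin (l i), {ω | ω ∈ E i j (αstar i j ω)})
      ≤ ENNReal.ofReal (∑ i : Fin n, ∑ j : Fin (l i), a i j) ∧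
    ENNReal.ofReal (∑ i : Fin n, ∑ j : Fin (l i), a i j) ≤ ENNReal.ofReal α :=
  multi_layer_family_based_FWER_control_general P n l α a hsum g hgrow abar t habar ht0 htle E
    hEmono hEbar αstar hαstar
end

section
/- Let (Ω, 𝓕, P) be a probability space, α ≥ 0, and α_{11}, α_{12}, α_{21}, α_{22} ≥ 0 with α_{11}+α_{12}+α_{21}+α_{22} ≤ α. Let t_1, t_2 be reals with 0 ≤ t_j ≤ α_{1j}, and g_{1j2i} ∈ [0,1] with g_{1j21}+g_{1j22} ≤ 1 for each j. Let C ⊆ Ω be a measurable event; for i = 1,2 let E_{2i}(·) be a monotone family of measurable events with P(E_{2i}(x)) ≤ x for all x ≥ 0, and let α*_{2i} : Ω → ℝ satisfy α*_{2i}(ω) ≤ α_{2i} + Σ_{j=1}^{2} (α_{1j} − t_j) g_{1j2i} for every ω ∈ C, with the sets {ω : ω ∈ E_{2i}(α*_{2i}(ω))} measurable. Then P( C ∩ ∪_{i=1}^{2} {ω : ω ∈ E_{2i}(α*_{2i}(ω))} ) ≤ α − Σ_{j=1}^{2} t_j. -/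
open MeasureTheory

/-- Combination of the containment bound (4) with the algebraic bound (5) in
the proof of Theorem 1: the probability of a type I error in the second layer
occurring jointly with no type I error in the first layer is at most α minus
the total first-layer error rate. -/
theorem second_layer_joint_error_bound
    {Ω : Type*} [MeasurableSpace Ω] (P : Measure Ω) [IsProbabilityMeasure P]
    (α : ℝ) (hα : 0 ≤ α)
    (α1 α2 : Fin 2 → ℝ) (hα1 : ∀ j, 0 ≤ α1 j) (hα2 : ∀ i, 0 ≤ α2 i)
    (hsum : α1 0 + α1 1 + α2 0 + α2 1 ≤ α)
    (t : Fin 2 → ℝ) (ht0 : ∀ j, 0 ≤ t j) (htle : ∀ j, t j ≤ α1 j)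
    (g : Fin 2 → Fin 2 → ℝ)  -- g j i = g_{1j2i}
    (hg0 : ∀ j i, 0 ≤ g j i) (hg1 : ∀ j i, g j i ≤ 1)
    (hgrow : ∀ j, g j 0 + g j 1 ≤ 1)
    (C : Set Ω) (hC : MeasurableSet C)
    (E : Fin 2 → ℝ → Set Ω)
    (hEmeas : ∀ i x, MeasurableSet (E i x))
    (hEmono : ∀ i x y, x ≤ y → E i x ⊆ E i y)
    (hEFWER : ∀ i x, 0 ≤ x → P (E i x) ≤ ENNReal.ofReal x)
    (αstar : Fin 2 → Ω → ℝ)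
    (hbound : ∀ i ω, ω ∈ C →
      αstar i ω ≤ α2 i + ∑ j : Fin 2, (α1 j - t j) * g j i)
    (hSmeas : ∀ i, MeasurableSet {ω | ω ∈ E i (αstar i ω)}) :
    P (C ∩ ⋃ i : Fin 2, {ω | ω ∈ E i (αstar i ω)})
      ≤ ENNReal.ofReal (α - (t 0 + t 1)) := by

  set b : Fin 2 → ℝ := fun i => α2 i + ∑ j : Fin 2, (α1 j - t j) * g j i with hb
  have hbnn : ∀ i, 0 ≤ b i := by
    intro i
    apply add_nonneg (hα2 i)
    apply Finset.sum_nonneg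
    intro j _
    exact mul_nonneg (sub_nonneg.2 (htle j)) (hg0 j i)
  have hsub : ∀ i, C ∩ {ω | ω ∈ E i (αstar i ω)} ⊆ E i (b i) := by
    intro i ω ⟨hωC, hωE⟩
    exact hEmono i (αstar i ω) (b i) (hbound i ω hωC) hωE
  have h1 : P (C ∩ ⋃ i : Fin 2, {ω | ω ∈ E i (αstar i ω)})
      ≤ P (E 0 (b 0)) + P (E 1 (b 1)) := by
    have : C ∩ ⋃ i : Fin 2, {ω | ω ∈ E i (αstar i ω)}
        ⊆ E 0 (b 0) ∪ E 1 (b 1) := by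
      rintro ω ⟨hωC, hωU⟩
      rcases Set.mem_iUnion.1 hωU with ⟨i, hi⟩
      fin_cases i
      · exact Or.inl (hsub 0 ⟨hωC, hi⟩)
      · exact Or.inr (hsub 1 ⟨hωC, hi⟩)
    exact le_trans (measure_mono this) (measure_union_le _ _)
  have h2 : P (E 0 (b 0)) + P (E 1 (b 1))
      ≤ ENNReal.ofReal (b 0) + ENNReal.ofReal (b 1) :=
    add_le_add (hEFWER 0 _ (hbnn 0)) (hEFWER 1 _ (hbnn 1))
  have h3 : ENNReal.ofReal (b 0) + ENNReal.ofReal (b 1)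
      = ENNReal.ofReal (b 0 + b 1) :=
    (ENNReal.ofReal_add (hbnn 0) (hbnn 1)).symm
  have hkey : b 0 + b 1 ≤ α - (t 0 + t 1) := by
    have e : ∀ j : Fin 2, (α1 j - t j) * g j 0 + (α1 j - t j) * g j 1 ≤ α1 j - t j := by
      intro j
      rw [← mul_add]
      calc (α1 j - t j) * (g j 0 + g j 1) ≤ (α1 j - t j) * 1 :=
            mul_le_mul_of_nonneg_left (hgrow j) (sub_nonneg.2 (htle j))
        _ = α1 j - t j := mul_one _
    have h0 := e 0
    have h1' := e 1
    simp only [hb, Fin.sum_univ_two]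
    linarith
  calc P (C ∩ ⋃ i : Fin 2, {ω | ω ∈ E i (αstar i ω)})
      ≤ ENNReal.ofReal (b 0) + ENNReal.ofReal (b 1) := le_trans h1 h2
    _ = ENNReal.ofReal (b 0 + b 1) := h3
    _ ≤ ENNReal.ofReal (α - (t 0 + t 1)) := ENNReal.ofReal_le_ofReal hkey
end
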